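/- arXiv:1507.06965 — 2 statements merged into one kernel-verified Lean document; each statement's English description precedes it below -/
import Mathlib

section
/- Under the hypotheses that r^n ≠ 0, γ^n > 1, γ^n ε_T < 1, g^{n+1} − g^n = r^n − r^{n+1}, and | ‖r^{n+1}‖/‖r^n‖ − (1 − 1/γ^n) | < ε_T, the updated parameter γ̃^{n+1} := q · ⟨r^n, r^n⟩ / ⟨r^n, g^{n+1} − g^n⟩ (with 0 < q < 1) satisfies q·γ^n/(γ^n(2 + ε_T) − 1) < γ̃^{n+1} < q·γ^n/(1 − ε_T γ^n). -/
/-!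
With `t = ⟪rⁿ, rⁿ - rⁿ⁺¹⟫ / ‖rⁿ‖²` the updated parameter equals `q / t`. Cauchy–Schwarz gives
`|t - 1| ≤ ‖rⁿ⁺¹‖ / ‖rⁿ‖`, and the rate hypothesis bounds this ratio by `1 - 1/γ + ε_T`, so
`1/γ - ε_T < t < 2 - 1/γ + ε_T`; the lower end is positive because `γ ε_T < 1`.
-/

open scoped RealInnerProductSpace

section
variable {E : Type*} [NormedAddCommGroup E] [InnerProductSpace ℝ E]

lemma abs_inner_sub_div_norm_sq_sub_one_le (r r' : E) (hr0 : r ≠ 0) :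
    |⟪r, r - r'⟫ / ‖r‖ ^ 2 - 1| ≤ ‖r'‖ / ‖r‖ := by
  have hr : 0 < ‖r‖ := norm_pos_iff.mpr hr0
  have hcs : |⟪r, r'⟫| ≤ ‖r‖ * ‖r'‖ := abs_real_inner_le_norm r r'
  rw [inner_sub_right, real_inner_self_eq_norm_sq, sub_div, div_self (by positivity),
    sub_sub_cancel_left, abs_neg, abs_div, abs_pow, abs_norm, div_le_div_iff₀ (by positivity) hr]
  calc |⟪r, r'⟫| * ‖r‖ ≤ ‖r‖ * ‖r'‖ * ‖r‖ := by gcongr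
    _ = ‖r'‖ * ‖r‖ ^ 2 := by ring

end

theorem gamma_update_bounds_general {d : ℕ}
    (rn rn1 gn gn1 : EuclideanSpace ℝ (Fin d))
    (hrn : rn ≠ 0) (γ εT q : ℝ) (hγ : 1 < γ) (hγε : γ * εT < 1)
    (hq0 : 0 < q)
    (hg : gn1 - gn = rn - rn1)
    (hrate : |‖rn1‖ / ‖rn‖ - (1 - 1/γ)| < εT) :
    q * γ / (γ * (2 + εT) - 1) < q * ⟪rn, rn⟫ / ⟪rn, gn1 - gn⟫ ∧
      q * ⟪rn, rn⟫ / ⟪rn, gn1 - gn⟫ < q * γ / (1 - εT * γ) := by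
  have hγ0 : 0 < γ := one_pos.trans hγ
  have hdev := abs_inner_sub_div_norm_sq_sub_one_le rn rn1 hrn
  set t := ⟪rn, rn - rn1⟫ / ‖rn‖ ^ 2
  obtain ⟨hlo, hhi⟩ : 1 / γ - εT < t ∧ t < 2 - 1 / γ + εT := by
    rw [abs_le] at hdev
    rw [abs_lt] at hrate
    constructor <;> linarith
  have hεγ : 0 < 1 / γ - εT := by
    rw [sub_pos, lt_div_iff₀ hγ0]
    linarith
  have hquot : q * ⟪rn, rn⟫ / ⟪rn, gn1 - gn⟫ = q / t := by
    rw [hg, real_inner_self_eq_norm_sq, div_div_eq_mul_div]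
  rw [hquot]
  constructor
  · calc q * γ / (γ * (2 + εT) - 1) = q / (2 - 1 / γ + εT) := by
          field_simp
          ring
      _ < q / t := div_lt_div_of_pos_left hq0 (hεγ.trans hlo) hhi
  · calc q / t < q / (1 / γ - εT) := div_lt_div_of_pos_left hq0 hεγ hlo
      _ = q * γ / (1 - εT * γ) := by
          field_simp

/-- Corollary 4.2: two-sided bound on the updated dissipation parameter γ̃ⁿ⁺¹. -/
theorem gamma_update_bounds {d : ℕ}
    (rn rn1 gn gn1 : EuclideanSpace ℝ (Fin d))
    (hrn : rn ≠ 0) (γ εT q : ℝ) (hγ : 1 < γ) (hεT : 0 < εT) (hγε : γ * εT < 1)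
    (hq0 : 0 < q) (hq1 : q < 1)
    (hg : gn1 - gn = rn - rn1)
    (hrate : |‖rn1‖ / ‖rn‖ - (1 - 1/γ)| < εT) :
    q * γ / (γ * (2 + εT) - 1) < q * ⟪rn, rn⟫ / ⟪rn, gn1 - gn⟫ ∧
      q * ⟪rn, rn⟫ / ⟪rn, gn1 - gn⟫ < q * γ / (1 - εT * γ) :=
  gamma_update_bounds_general rn rn1 gn gn1 hrn γ εT q hγ hγε hq0 hg hrate
end

section
/- Let 0 < ε_T, 0 < q < 1, and γ > 1 with γ ≤ γ_MONO = (1/ε_T)(1 − q/q̄) for some q < q̄ ≤ 1. Then ε_T γ < 1 and q/(1 − ε_T γ) ≤ q̄, so the interval (qγ/(γ(2+ε_T) − 1), qγ/(1 − ε_T γ)) containing the updated parameter γ̃ is contained in (0, q̄ γ). -/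
/-! Since `εT > 0`, the bound `γ ≤ γ_MONO` says `εT γ ≤ 1 - q / q̄`, so `1 - εT γ ≥ q / q̄ > 0`,
which is `q / (1 - εT γ) ≤ q̄`. The update interval then has a positive lower end (because
`γ (2 + εT) > 1`) and an upper end `(q / (1 - εT γ)) γ ≤ q̄ γ`. -/

lemma lt_one_of_le_one_sub_div {t q qbar : ℝ} (hq : 0 < q) (hqbar : 0 < qbar)
    (h : t ≤ 1 - q / qbar) : t < 1 := by
  have := div_pos hq hqbar
  linarith

lemma div_one_sub_le_of_le_one_sub_div {t q qbar : ℝ} (hq : 0 < q) (hqbar : 0 < qbar)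
    (h : t ≤ 1 - q / qbar) : q / (1 - t) ≤ qbar := by
  have hden : 0 < 1 - t := sub_pos.mpr (lt_one_of_le_one_sub_div hq hqbar h)
  have hdiv : q / qbar ≤ 1 - t := by linarith
  rw [div_le_iff₀ hqbar] at hdiv
  rwa [div_le_iff₀ hden, mul_comm]

lemma div_mul_two_add_sub_one_pos {q γ ε : ℝ} (hq : 0 < q) (hγ : 1 < γ) (hε : 0 < ε) :
    0 < q * γ / (γ * (2 + ε) - 1) := by
  have hden : 0 < γ * (2 + ε) - 1 := by nlinarith
  have hγ0 : 0 < γ := one_pos.trans hγ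
  positivity

theorem gamma_mono_interval_general (εT q qbar γ : ℝ)
    (hεT : 0 < εT) (hq0 : 0 < q) (hγ : 1 < γ)
    (hqq : q < qbar)
    (hγmono : γ ≤ (1/εT) * (1 - q/qbar)) :
    εT * γ < 1 ∧ q / (1 - εT * γ) ≤ qbar ∧
      ∀ x : ℝ, q * γ / (γ * (2 + εT) - 1) < x → x < q * γ / (1 - εT * γ) →
        0 < x ∧ x < qbar * γ := by
  have hqbar0 : 0 < qbar := hq0.trans hqq
  have hεTγ : εT * γ ≤ 1 - q / qbar := by
    rwa [one_div_mul_eq_div, le_div_iff₀' hεT] at hγmono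
  have hupper := div_one_sub_le_of_le_one_sub_div hq0 hqbar0 hεTγ
  refine ⟨lt_one_of_le_one_sub_div hq0 hqbar0 hεTγ, hupper, fun x hlo hhi => ?_⟩
  refine ⟨(div_mul_two_add_sub_one_pos hq0 hγ hεT).trans hlo, hhi.trans_le ?_⟩
  rw [mul_div_right_comm]
  exact mul_le_mul_of_nonneg_right hupper (by linarith)

/-- The γ_MONO bound combines with the two-sided γ-update bound: the update
interval is contained in (0, q̄ γ). -/
theorem gamma_mono_interval (εT q qbar γ : ℝ)
    (hεT : 0 < εT) (hq0 : 0 < q) (hq1 : q < 1) (hγ : 1 < γ)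
    (hqq : q < qbar) (hqbar : qbar ≤ 1)
    (hγmono : γ ≤ (1/εT) * (1 - q/qbar)) :
    εT * γ < 1 ∧ q / (1 - εT * γ) ≤ qbar ∧
      ∀ x : ℝ, q * γ / (γ * (2 + εT) - 1) < x → x < q * γ / (1 - εT * γ) →
        0 < x ∧ x < qbar * γ :=
  gamma_mono_interval_general εT q qbar γ hεT hq0 hγ hqq hγmono
end
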